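/- arXiv:1308.1044 — 2 statements merged into one kernel-verified Lean document; each statement's English description precedes it below -/
import Mathlib

section
/- Let m be a positive integer and let Y be a Young diagram in Γ_m. Then H_Y < (m + 1)^{(m+1)^2}. -/
/-- The hook length of the cell `(i, j)` of a Young diagram `Y`. -/
def hookLength (Y : YoungDiagram) (i j : ℕ) : ℕ :=
  (Y.rowLen i - j) + (Y.colLen j - i) - 1

/-- `H_Y`: the product of the hook lengths of all the cells of `Y`. -/
def hookProd (Y : YoungDiagram) : ℕ :=
  ∏ c ∈ Y.cells, hookLength Y c.1 c.2

/-- `Γ m`: the set of Young diagrams with exactly `m` nonempty rows in which every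
row length lies between `m` and `m + 2` inclusive. -/
def Gamma (m : ℕ) : Set YoungDiagram :=
  {Y | Y.colLen 0 = m ∧ ∀ i < m, m ≤ Y.rowLen i ∧ Y.rowLen i ≤ m + 2}

/-!
A diagram with at most `a` rows of length at most `b` has each hook length bounded by the
hook length `a + b - 1 - (i + j)` of the same cell in the `a × b` rectangle. In the rectangle
the cells `(i, j)` and `(a - 1 - i, b - 1 - j)` have hook lengths summing to `a + b`, so by
AM-GM the rectangle's hook product is at most `((a + b) / 2) ^ (a * b)`. For `Y ∈ Γ m` this
gives `H_Y ≤ (m + 1) ^ (m * (m + 2))`, and `m * (m + 2) < (m + 1) ^ 2`.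
-/

open Finset

def rectHookLength (a b i j : ℕ) : ℕ := a + b - 1 - (i + j)

def rectHookProd (a b : ℕ) : ℕ := ∏ i ∈ range a, ∏ j ∈ range b, rectHookLength a b i j

section InRectangle

variable {Y : YoungDiagram} {a b : ℕ}

lemma lt_and_lt_of_mem_of_colLen_le_of_rowLen_le (ha : Y.colLen 0 ≤ a)
    (hb : Y.rowLen 0 ≤ b) {i j : ℕ} (hij : (i, j) ∈ Y) : i < a ∧ j < b :=
  ⟨(YoungDiagram.mem_iff_lt_colLen.mp hij).trans_le ((Y.colLen_anti 0 j j.zero_le).trans ha),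
    (YoungDiagram.mem_iff_lt_rowLen.mp hij).trans_le ((Y.rowLen_anti 0 i i.zero_le).trans hb)⟩

lemma hookLength_le_rectHookLength (ha : Y.colLen 0 ≤ a) (hb : Y.rowLen 0 ≤ b) {i j : ℕ}
    (hij : (i, j) ∈ Y) : hookLength Y i j ≤ rectHookLength a b i j := by
  have hrow := YoungDiagram.mem_iff_lt_rowLen.mp hij
  have hcol := YoungDiagram.mem_iff_lt_colLen.mp hij
  have hrow_le := (Y.rowLen_anti 0 i i.zero_le).trans hb
  have hcol_le := (Y.colLen_anti 0 j j.zero_le).trans ha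
  unfold hookLength rectHookLength
  omega

lemma hookProd_le_rectHookProd (ha : Y.colLen 0 ≤ a) (hb : Y.rowLen 0 ≤ b) :
    hookProd Y ≤ rectHookProd a b := by
  have hcells : Y.cells ⊆ range a ×ˢ range b := fun c hc => by
    obtain ⟨hi, hj⟩ := lt_and_lt_of_mem_of_colLen_le_of_rowLen_le ha hb hc
    simp [hi, hj]
  rw [rectHookProd, ← prod_product' (f := rectHookLength a b)]
  calc hookProd Y ≤ ∏ c ∈ Y.cells, rectHookLength a b c.1 c.2 :=
        prod_le_prod' fun c hc => hookLength_le_rectHookLength ha hb hc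
    _ ≤ ∏ c ∈ range a ×ˢ range b, rectHookLength a b c.1 c.2 := by
        refine prod_le_prod_of_subset_of_one_le' hcells fun c hc _ => ?_
        simp only [mem_product, mem_range] at hc
        unfold rectHookLength
        omega

end InRectangle

lemma prod_rectHookLength_reflect (a b : ℕ) :
    ∏ i ∈ range a, ∏ j ∈ range b, rectHookLength a b (a - 1 - i) (b - 1 - j) =
      rectHookProd a b := by
  rw [rectHookProd, ← prod_range_reflect (fun i => ∏ j ∈ range b, rectHookLength a b i j)]
  exact prod_congr rfl fun i _ => prod_range_reflect (rectHookLength a b (a - 1 - i)) b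

lemma four_mul_rectHookLength_mul_reflect_le (a b : ℕ) {i j : ℕ} (hi : i < a) (hj : j < b) :
    4 * (rectHookLength a b i j * rectHookLength a b (a - 1 - i) (b - 1 - j)) ≤
      (a + b) ^ 2 := by
  have hreflect : rectHookLength a b (a - 1 - i) (b - 1 - j) = i + j + 1 := by
    unfold rectHookLength
    omega
  rw [hreflect, rectHookLength]
  zify [show i + j ≤ a + b - 1 by omega, show 1 ≤ a + b by omega]
  nlinarith [sq_nonneg ((a : ℤ) + b - 2 * (i + j + 1))]

lemma two_pow_mul_rectHookProd_le (a b : ℕ) :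
    2 ^ (a * b) * rectHookProd a b ≤ (a + b) ^ (a * b) := by
  have hsq : (2 ^ (a * b) * rectHookProd a b) ^ 2 = ∏ i ∈ range a, ∏ j ∈ range b,
      4 * (rectHookLength a b i j * rectHookLength a b (a - 1 - i) (b - 1 - j)) := by
    simp only [prod_mul_distrib, prod_const, card_range, prod_rectHookLength_reflect]
    rw [rectHookProd, ← pow_mul, show (4 : ℕ) = 2 ^ 2 by norm_num, ← pow_mul]
    ring
  have hbound : ∏ i ∈ range a, ∏ j ∈ range b,
      4 * (rectHookLength a b i j * rectHookLength a b (a - 1 - i) (b - 1 - j)) ≤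
        ((a + b) ^ (a * b)) ^ 2 := by
    calc _ ≤ ∏ i ∈ range a, ∏ j ∈ range b, (a + b) ^ 2 :=
          prod_le_prod' fun i hi => prod_le_prod' fun j hj =>
            four_mul_rectHookLength_mul_reflect_le a b (mem_range.mp hi) (mem_range.mp hj)
      _ = ((a + b) ^ (a * b)) ^ 2 := by
          simp only [prod_const, card_range, ← pow_mul]
          ring
  exact (Nat.pow_le_pow_iff_left two_ne_zero).mp (hsq ▸ hbound)

lemma rectHookProd_le_of_add_eq {a b n : ℕ} (h : a + b = 2 * n) :
    rectHookProd a b ≤ n ^ (a * b) := by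
  have := two_pow_mul_rectHookProd_le a b
  rw [h, mul_pow] at this
  exact Nat.le_of_mul_le_mul_left this (by positivity)

/-- for a positive integer `m` and `Y ∈ Γ m`,
`H_Y < (m + 1)^((m + 1)^2)`. -/
theorem hookProd_lt_of_mem_Gamma
    (m : ℕ) (hm : 0 < m) (Y : YoungDiagram) (hY : Y ∈ Gamma m) :
    hookProd Y < (m + 1) ^ ((m + 1) ^ 2) := by
  obtain ⟨hcol, hrow⟩ := hY
  calc hookProd Y ≤ rectHookProd m (m + 2) := hookProd_le_rectHookProd hcol.le (hrow 0 hm).2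
    _ ≤ (m + 1) ^ (m * (m + 2)) := rectHookProd_le_of_add_eq (by ring)
    _ < (m + 1) ^ ((m + 1) ^ 2) := Nat.pow_lt_pow_right (by omega) (by nlinarith)
end

section
/- Let n ≥ 64 be an integer and let Y be a Young diagram in Γ_m with exactly n cells (so that m ≥ 8). Then (n!)^{13/14} / (n − 1) ≥ H_Y. -/
/-!
A diagram of `Γ m` contains the `m × m` square, so `m² ≤ n`, and its rows and columns
have lengths at most `m + 2` and `m`, so every hook has length at most `2m + 1`; hence
`H_Y ≤ (2m + 1)ⁿ ≤ ((17/8) √n)ⁿ` once `n ≥ 64`. Against Stirling's bound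
`log n! ≥ n (log n - 1)`, the remaining inequality
`n log (2m + 1) + log (n - 1) ≤ (13/14) log n!` reduces to
`log (17/8) + 13/14 + (log n)/n ≤ (3/7) log n`, which holds at `n = 64` and
persists because `log n / n` decreases.
-/

open Finset

section Gamma

variable {m : ℕ} {Y : YoungDiagram}

lemma colLen_le_of_mem_Gamma (hY : Y ∈ Gamma m) (j : ℕ) : Y.colLen j ≤ m :=
  hY.1 ▸ Y.colLen_anti 0 j (Nat.zero_le j)

lemma fst_lt_of_mem_cells_of_mem_Gamma (hY : Y ∈ Gamma m) {c : ℕ × ℕ} (hc : c ∈ Y.cells) :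
    c.1 < m :=
  (YoungDiagram.mem_iff_lt_colLen.mp ((YoungDiagram.mem_cells c).1 hc)).trans_le
    (colLen_le_of_mem_Gamma hY c.2)

lemma range_product_subset_cells_of_mem_Gamma (hY : Y ∈ Gamma m) :
    range m ×ˢ range m ⊆ Y.cells := fun c hc => by
  simp only [mem_product, mem_range] at hc
  rw [YoungDiagram.mem_cells, YoungDiagram.mem_iff_lt_rowLen]
  exact hc.2.trans_le (hY.2 c.1 hc.1).1

lemma mul_self_le_card_of_mem_Gamma (hY : Y ∈ Gamma m) : m * m ≤ Y.card := by
  simpa only [card_product, card_range] using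
    card_le_card (range_product_subset_cells_of_mem_Gamma hY)

lemma hookLength_le_of_mem_Gamma (hY : Y ∈ Gamma m) {c : ℕ × ℕ} (hc : c ∈ Y.cells) :
    hookLength Y c.1 c.2 ≤ 2 * m + 1 := by
  have hrow := (hY.2 c.1 (fst_lt_of_mem_cells_of_mem_Gamma hY hc)).2
  have hcol := colLen_le_of_mem_Gamma hY c.2
  unfold hookLength
  omega

lemma hookProd_le_pow_card_of_mem_Gamma (hY : Y ∈ Gamma m) :
    hookProd Y ≤ (2 * m + 1) ^ Y.card :=
  prod_le_pow_card _ _ _ fun _ hc => hookLength_le_of_mem_Gamma hY hc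

end Gamma

section Analytic

open Real

lemma mul_log_sub_one_le_log_factorial (n : ℕ) : n * (log n - 1) ≤ log n.factorial := by
  rcases n.eq_zero_or_pos with rfl | hn
  · simp
  have hπ : 0 ≤ log (2 * π) := log_nonneg (by linarith [pi_gt_three])
  have hlog : 0 ≤ log n := log_natCast_nonneg n
  linarith [Stirling.le_log_factorial_stirling hn.ne']

lemma log_div_self_le_log_sixtyfour_div {x : ℝ} (hx : 64 ≤ x) : log x / x ≤ log 64 / 64 := by
  have he : exp 1 ≤ 64 := by linarith [exp_one_lt_d9]
  exact log_div_self_antitoneOn (Set.mem_Ici.2 he) (Set.mem_Ici.2 (he.trans hx)) hx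

lemma log_two_mul_add_one_le {m n : ℕ} (hmn : m * m ≤ n) (hn : 64 ≤ n) :
    log (2 * m + 1) ≤ log (17 / 8) + log n / 2 := by
  have hm : (m : ℝ) ≤ √n := le_sqrt_of_sq_le (by exact_mod_cast (sq m).trans_le hmn)
  have h8 : (8 : ℝ) ≤ √n := le_sqrt_of_sq_le (by norm_num; exact_mod_cast hn)
  rw [← log_sqrt (Nat.cast_nonneg n), ← log_mul (by norm_num) (by positivity)]
  exact log_le_log (by positivity) (by linarith)

lemma log_seventeen_eighths_add_le :
    log (17 / 8) + 13 / 14 + log 64 / 64 ≤ 3 / 7 * log 64 := by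
  have h64 : log 64 = 6 * log 2 := by
    rw [show (64 : ℝ) = 2 ^ 6 by norm_num, log_pow]; norm_num
  have h178 : log (17 / 8) = log 2 + log (17 / 16) := by
    rw [← log_mul (by norm_num) (by norm_num)]; norm_num
  have h1716 : log (17 / 16) ≤ 17 / 16 - 1 := log_le_sub_one_of_pos (by norm_num)
  linarith [log_two_gt_d9]

lemma pow_mul_sub_one_le_factorial_rpow {m n : ℕ} (hmn : m * m ≤ n) (hn : 64 ≤ n) :
    (2 * m + 1 : ℝ) ^ n * (n - 1) ≤ (n.factorial : ℝ) ^ ((13 : ℝ) / 14) := by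
  have hn' : (64 : ℝ) ≤ n := by exact_mod_cast hn
  rw [← log_le_log_iff (mul_pos (by positivity) (by linarith)) (by positivity),
    log_mul (by positivity) (by linarith), log_pow, log_rpow (by exact_mod_cast n.factorial_pos)]
  have hn0 : (0 : ℝ) ≤ n := n.cast_nonneg
  have hbase := mul_le_mul_of_nonneg_left (log_two_mul_add_one_le hmn hn) hn0
  have hsub : log (n - 1) ≤ log n := log_le_log (by linarith) (by linarith)
  have hL : log n ≤ n * (log 64 / 64) := by
    have := log_div_self_le_log_sixtyfour_div hn'
    rwa [div_le_iff₀ (by linarith), mul_comm] at this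
  have hL64 : n * log 64 ≤ n * log n := mul_le_mul_of_nonneg_left
    (log_le_log (by norm_num) hn') hn0
  have hnum := mul_le_mul_of_nonneg_left log_seventeen_eighths_add_le hn0
  linarith [mul_log_sub_one_le_log_factorial n]

end Analytic

/-- if `n ≥ 64` and `Y ∈ Γ m` has `n` cells (so that `m ≥ 8`), then
`(n!)^(13/14) / (n - 1) ≥ H_Y`. -/
theorem hookProd_le_of_mem_Gamma
    (n m : ℕ) (hn : 64 ≤ n) (Y : YoungDiagram) (hY : Y ∈ Gamma m)
    (hcard : Y.card = n) :
    (hookProd Y : ℝ) ≤ (n.factorial : ℝ) ^ ((13 : ℝ) / 14) / ((n : ℝ) - 1) := by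
  subst hcard
  have hpos : (0 : ℝ) < Y.card - 1 := by
    have : (64 : ℝ) ≤ Y.card := by exact_mod_cast hn
    linarith
  rw [le_div_iff₀ hpos]
  calc (hookProd Y : ℝ) * (Y.card - 1) ≤ (2 * m + 1 : ℝ) ^ Y.card * (Y.card - 1) := by
        gcongr
        exact_mod_cast hookProd_le_pow_card_of_mem_Gamma hY
    _ ≤ _ := pow_mul_sub_one_le_factorial_rpow (mul_self_le_card_of_mem_Gamma hY) hn
end
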